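/- Let x(s,t) = k(s)X(t), y(s,t) = m(s)Y(t), z(s,t) = w(s)Z(t) with C¹ factor functions, and suppose X(t₀) = Y(t₀) = Z(t₀) = 0 and either m(s) = 0 for all s or dY/dt(t₀) = 0. Then for a null curve α with Cartan frame {ℓ,n,u} and k₁ ≠ 0, the curve α is an asymptotic parametric curve on φ(s,t) = α(s) + xℓ + yn + zu, i.e., φ(s,t₀) = α(s) and ⟨∂N/∂s(s,t₀), ℓ(s)⟩ = 0 for all s. -/

import Mathlib

noncomputable section

def lz (v w : ℝ × ℝ × ℝ) : ℝ := -(v.1 * w.1) + v.2.1 * w.2.1 + v.2.2 * w.2.2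

def cx (a b : ℝ × ℝ × ℝ) : ℝ × ℝ × ℝ :=
  (a.2.2 * b.2.1 - a.2.1 * b.2.2, a.2.2 * b.1 - a.1 * b.2.2, a.1 * b.2.1 - a.2.1 * b.1)

lemma cx_expand (a : ℝ × ℝ × ℝ) (p q r : ℝ) (b c d : ℝ × ℝ × ℝ) :
    cx a (p • b + q • c + r • d) = p • cx a b + q • cx a c + r • cx a d := by
  simp [cx, Prod.ext_iff, Prod.smul_def, smul_eq_mul]
  refine ⟨by ring, by ring, by ring⟩

lemma lz_expand (p q : ℝ) (a b c : ℝ × ℝ × ℝ) :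
    lz (p • a + q • b) c = p * lz a c + q * lz b c := by
  simp [lz, Prod.smul_def, smul_eq_mul]; ring

/-- Corollary 3.1: with separable marching-scale functions x = k·X, y = m·Y, z = w·Z
satisfying X(t₀) = Y(t₀) = Z(t₀) = 0 and (m ≡ 0 or Y'(t₀) = 0), the null curve α is an
asymptotic parametric curve on φ(s,t) = α(s) + xℓ + yn + zu. -/
theorem corollary_separable
    (α ℓ n u : ℝ → ℝ × ℝ × ℝ) (k₁ k₂ : ℝ → ℝ) (t₀ : ℝ)
    (k m w X Y Z : ℝ → ℝ)
    (hα : ∀ s, HasDerivAt α (ℓ s) s)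
    (hℓ : ∀ s, HasDerivAt ℓ (k₁ s • u s) s)
    (hn : ∀ s, HasDerivAt n (-(k₂ s) • u s) s)
    (hu : ∀ s, HasDerivAt u (-(k₂ s) • ℓ s + k₁ s • n s) s)
    (hframe : ∀ s, lz (ℓ s) (ℓ s) = 0 ∧ lz (n s) (n s) = 0 ∧ lz (u s) (u s) = 1 ∧
      lz (ℓ s) (n s) = -1 ∧ lz (ℓ s) (u s) = 0 ∧ lz (n s) (u s) = 0)
    (hcross : ∀ s, cx (ℓ s) (n s) = u s ∧ cx (n s) (u s) = -n s ∧ cx (ℓ s) (u s) = ℓ s)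
    (hk₁ : ∀ s, k₁ s ≠ 0)
    (hk : Differentiable ℝ k) (hm : Differentiable ℝ m) (hw : Differentiable ℝ w)
    (hX : Differentiable ℝ X) (hY : Differentiable ℝ Y) (hZ : Differentiable ℝ Z)
    (hX0 : X t₀ = 0) (hY0 : Y t₀ = 0) (hZ0 : Z t₀ = 0)
    (hcond : (∀ s, m s = 0) ∨ deriv Y t₀ = 0)
    (φ : ℝ → ℝ → ℝ × ℝ × ℝ)
    (hφ : ∀ s t, φ s t = α s + (k s * X t) • ℓ s + (m s * Y t) • n s + (w s * Z t) • u s)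
    (N : ℝ → ℝ → ℝ × ℝ × ℝ)
    (hN : ∀ s t, N s t = cx (deriv (fun s' => φ s' t) s) (deriv (fun t' => φ s t') t)) :
    (∀ s, φ s t₀ = α s) ∧
    ∀ dN : ℝ → ℝ × ℝ × ℝ, (∀ s, HasDerivAt (fun s' => N s' t₀) (dN s) s) →
      ∀ s, lz (dN s) (ℓ s) = 0 := by
  have hφ0 : ∀ s, φ s t₀ = α s := by
    intro s; simp [hφ, hX0, hY0, hZ0]
  refine ⟨hφ0, ?_⟩
  intro dN hdN s
  -- compute N s' t₀
  have hNval : ∀ s', N s' t₀ = (w s' * deriv Z t₀) • ℓ s' := by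
    intro s'
    have h1 : deriv (fun s'' => φ s'' t₀) s' = ℓ s' := by
      have : (fun s'' => φ s'' t₀) = α := funext hφ0
      rw [this]; exact (hα s').deriv
    have h2 : HasDerivAt (fun t' => φ s' t')
        ((k s' * deriv X t₀) • ℓ s' + (m s' * deriv Y t₀) • n s' +
          (w s' * deriv Z t₀) • u s') t₀ := by
      have hx := (((hX t₀).hasDerivAt.const_mul (k s')).smul_const (ℓ s'))
      have hy := (((hY t₀).hasDerivAt.const_mul (m s')).smul_const (n s'))
      have hz := (((hZ t₀).hasDerivAt.const_mul (w s')).smul_const (u s'))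
      have := (((hasDerivAt_const t₀ (α s')).add hx).add hy).add hz
      refine HasDerivAt.congr_of_eventuallyEq (by simpa only [zero_add] using this)
        (Filter.Eventually.of_forall fun t' => ?_)
      simp [hφ]
    rw [hN, h1, h2.deriv, cx_expand]
    have h5 := (hcross s').2.2
    have hℓℓ : cx (ℓ s') (ℓ s') = 0 := by
      simp [cx, Prod.ext_iff]; refine ⟨by ring, by ring, by ring⟩
    have hmY : m s' * deriv Y t₀ = 0 := by
      rcases hcond with h | h
      · simp [h]
      · simp [h]
    rw [hℓℓ, (hcross s').1, h5, hmY]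
    simp
  -- derivative of s' ↦ (w s' * c) • ℓ s'
  set c := deriv Z t₀ with hc
  have hg : HasDerivAt (fun s' => (w s' * c) • ℓ s')
      ((w s * c) • (k₁ s • u s) + (deriv w s * c) • ℓ s) s :=
    (((hw s).hasDerivAt.mul_const c).smul (hℓ s))
  have heq : (fun s' => N s' t₀) = fun s' => (w s' * c) • ℓ s' := funext hNval
  have hdn : dN s = (w s * c) • (k₁ s • u s) + (deriv w s * c) • ℓ s := by
    have := hdN s
    rw [heq] at this
    exact this.unique hg
  obtain ⟨h1, -, -, -, h5, -⟩ := hframe s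
  have hlu : lz (u s) (ℓ s) = 0 := by
    simp [lz] at h5 ⊢; linarith [h5]
  rw [hdn, smul_smul, lz_expand]
  rw [h1, hlu]; ring
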